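/- arXiv:2310.04235 — 7 statements merged into one kernel-verified Lean document; each statement's English description precedes it below -/
import Mathlib

section
/- Every LEF semigroup is LWF. That is, if a semigroup S has the property that for every finite subset H of S there exist a finite semigroup F and an injective function f : H → F with f(x*y) = f(x)*f(y) for all x, y ∈ H with x*y ∈ H, then for every finite subset H of S there exist a finite semigroup D and a function d : D → S such that H ⊆ d(D) and d(x'*y') = d(x')*d(y') for all x', y' ∈ D with d(x') ∈ H and d(y') ∈ H. -/
/-- A semigroup `S` is LEF (locally embeddable into the class of finite semigroups) if for
every finite subset `H` of `S` there exist a finite semigroup `F` and a function `f : S → F`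
injective on `H` such that `f (x * y) = f x * f y` whenever `x, y, x * y ∈ H`. -/
def IsLEF (S : Type*) [Semigroup S] : Prop :=
  ∀ H : Finset S, ∃ (F : Type) (_ : Semigroup F) (_ : Fintype F) (f : S → F),
    Set.InjOn f ↑H ∧
      ∀ x ∈ H, ∀ y ∈ H, x * y ∈ H → f (x * y) = f x * f y

/-- A semigroup `S` is LWF (locally wrapped by the class of finite semigroups) if for every
finite subset `H` of `S` there exist a finite semigroup `D` and a function `d : D → S` such
that `H ⊆ d(D)` and `d (x' * y') = d x' * d y'` whenever `d x', d y' ∈ H`. -/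
def IsLWF (S : Type*) [Semigroup S] : Prop :=
  ∀ H : Finset S, ∃ (D : Type) (_ : Semigroup D) (_ : Fintype D) (d : D → S),
    (↑H ⊆ Set.range d) ∧
      ∀ x' y' : D, d x' ∈ H → d y' ∈ H → d (x' * y') = d x' * d y'

/-- Every LEF semigroup is LWF. -/
theorem isLWF_of_isLEF (S : Type*) [Semigroup S] (hS : IsLEF S) : IsLWF S := by
  classical
  intro H
  by_cases hc : ∃ c : S, c ∉ H
  · obtain ⟨c, hc⟩ := hc
    set H' : Finset S := H ∪ Finset.image₂ (· * ·) H H with hH'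
    obtain ⟨F, _, _, f, hinj, hmul⟩ := hS H'
    have hsub : H ⊆ H' := Finset.subset_union_left
    refine ⟨F, inferInstance, inferInstance, fun z =>
      if h : ∃ a, a ∈ H' ∧ f a = z then h.choose else c, ?_, ?_⟩
    · intro a ha
      have haH' : a ∈ H' := hsub ha
      have hex : ∃ b, b ∈ H' ∧ f b = f a := ⟨a, haH', rfl⟩
      refine ⟨f a, ?_⟩
      dsimp only
      rw [dif_pos hex]
      exact hinj hex.choose_spec.1 haH' hex.choose_spec.2
    · intro x' y' hx hy
      dsimp only at hx hy ⊢
      have hex : ∃ a, a ∈ H' ∧ f a = x' := by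
        by_contra h; rw [dif_neg h] at hx; exact hc hx
      have hey : ∃ b, b ∈ H' ∧ f b = y' := by
        by_contra h; rw [dif_neg h] at hy; exact hc hy
      rw [dif_pos hex] at hx ⊢
      rw [dif_pos hey] at hy ⊢
      set a := hex.choose with ha
      set b := hey.choose with hb
      have haH' : a ∈ H' := hex.choose_spec.1
      have hbH' : b ∈ H' := hey.choose_spec.1
      have hfa : f a = x' := hex.choose_spec.2
      have hfb : f b = y' := hey.choose_spec.2
      have habH' : a * b ∈ H' := by
        exact Finset.mem_union_right _ (Finset.mul_mem_mul hx hy)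
      have hxy : x' * y' = f (a * b) := by
        rw [hmul a haH' b hbH' habH', hfa, hfb]
      have hexab : ∃ z, z ∈ H' ∧ f z = x' * y' := ⟨a * b, habH', hxy.symm⟩
      rw [dif_pos hexab]
      exact hinj hexab.choose_spec.1 habH' (hexab.choose_spec.2.trans hxy)
  · push_neg at hc
    have : Fintype S := ⟨H, hc⟩
    let e : S ≃ Fin (Fintype.card S) := Fintype.equivFin S
    let mul : Fin (Fintype.card S) → Fin (Fintype.card S) → Fin (Fintype.card S) :=
      fun a b => e (e.symm a * e.symm b)
    refine ⟨Fin (Fintype.card S),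
      { mul := mul,
        mul_assoc := by
          intro a b c
          show e (e.symm (e _) * _) = e (_ * e.symm (e _))
          simp [mul_assoc] },
      inferInstance, e.symm, ?_, ?_⟩
    · intro a _; exact ⟨e a, e.symm_apply_apply a⟩
    · intro x' y' _ _
      show e.symm (e (e.symm x' * e.symm y')) = _
      simp
end

section
/- The semigroup A presented by ⟨a, b | a*a*b = a⟩ contains no idempotent element, i.e., there is no e ∈ A with e*e = e. -/
/-!
Give the generators the weights `a ↦ 1`, `b ↦ -1` and record, for a word, its total weight, the
largest weight of a nonempty suffix, and how many nonempty suffixes attain it. These statistics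
multiply as in `SuffixStat` below and agree on `aab` and `a`, so they descend to `A`. An
idempotent statistic must have total weight `0`; then every maximal suffix of `w` gives one of
`ww` in each of the two copies of `w`, so the count doubles, which is impossible for a positive
count.
-/

namespace Stmt1

def a : FreeSemigroup (Fin 2) := FreeSemigroup.of 0

def b : FreeSemigroup (Fin 2) := FreeSemigroup.of 1

def rel : FreeSemigroup (Fin 2) → FreeSemigroup (Fin 2) → Prop :=
  fun x y => x = a * a * b ∧ y = a

def A : Type := (conGen rel).Quotient

instance : Semigroup A := Con.semigroup _

@[ext]
structure SuffixStat where
  weight : ℤ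
  maxSuffix : ℤ
  count : ℕ+

namespace SuffixStat

/-- A nonempty suffix of `u * v` is a suffix of `v`, or a suffix of `u` followed by `v`. -/
instance : Mul SuffixStat where
  mul u v :=
    { weight := u.weight + v.weight
      maxSuffix := max v.maxSuffix (v.weight + u.maxSuffix)
      count :=
        if v.maxSuffix < v.weight + u.maxSuffix then u.count
        else if v.weight + u.maxSuffix < v.maxSuffix then v.count
        else v.count + u.count }

@[simp] lemma weight_mul (u v : SuffixStat) : (u * v).weight = u.weight + v.weight := rfl

@[simp] lemma maxSuffix_mul (u v : SuffixStat) :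
    (u * v).maxSuffix = max v.maxSuffix (v.weight + u.maxSuffix) := rfl

lemma count_mul (u v : SuffixStat) :
    (u * v).count =
      if v.maxSuffix < v.weight + u.maxSuffix then u.count
      else if v.weight + u.maxSuffix < v.maxSuffix then v.count
      else v.count + u.count := rfl

instance : Semigroup SuffixStat where
  mul_assoc u v w := by
    ext
    · simp only [weight_mul, add_assoc]
    · simp only [weight_mul, maxSuffix_mul]
      omega
    · simp only [count_mul, weight_mul, maxSuffix_mul]
      split_ifs <;> first | rfl | omega | ac_rfl

lemma mul_self_ne (u : SuffixStat) : u * u ≠ u := by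
  intro h
  have hweight : u.weight = 0 := by simpa using congrArg weight h
  have hcount := congrArg count h
  simp only [count_mul, hweight, zero_add, lt_self_iff_false, if_false] at hcount
  exact (PNat.lt_add_left u.count u.count).ne' hcount

def of (n : ℤ) : SuffixStat := ⟨n, n, 1⟩

end SuffixStat

def suffixStat : FreeSemigroup (Fin 2) →ₙ* SuffixStat :=
  FreeSemigroup.lift fun i => SuffixStat.of (if i = 0 then 1 else -1)

lemma conGen_rel_le_ker_suffixStat : conGen rel ≤ Con.ker suffixStat := by
  rw [Con.conGen_le]
  rintro x y ⟨rfl, rfl⟩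
  rfl

/-- The semigroup `A = ⟨a, b ∣ aab = a⟩` has no idempotent element. -/
theorem no_idempotent_in_A : ¬ ∃ e : A, e * e = e := by
  rintro ⟨e, he⟩
  induction e using Con.induction_on with | H w => ?_
  have hw : conGen rel (w * w) w := Con.eq _ |>.mp he
  have hstat := conGen_rel_le_ker_suffixStat hw
  rw [Con.ker_rel, map_mul] at hstat
  exact SuffixStat.mul_self_ne _ hstat

end Stmt1
end

section
/- Let S be a semigroup containing elements x, y such that x*x*y = x and x*y*x ≠ x. Then S is not LEF: there exists a finite subset H of S (namely H = {x, y, x*y, x*y*x}) for which no finite semigroup F and injective function f : H → F satisfy f(u*v) = f(u)*f(v) for all u, v ∈ H with u*v ∈ H. -/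
/-- In a finite monoid, `a * a * b = a` implies `a * b * a = a`. -/
lemma key_monoid {M : Type} [Monoid M] [Finite M] (a b : M)
    (h : a * a * b = a) : a * b * a = a := by
  -- the family a^(n+1) * b^n = a
  have fam : ∀ n : ℕ, a ^ (n + 1) * b ^ n = a := by
    intro n
    induction n with
    | zero => simp
    | succ n ih =>
      have step : a ^ (n + 2) * b ^ (n + 1) = a * (a ^ (n + 1) * b ^ n) * b := by
        rw [pow_succ' a (n + 1), pow_succ b n]
        simp [mul_assoc]
      rw [step, ih]
      exact h
  -- find k ≥ 1 with a^k idempotent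
  obtain ⟨m, n, hmn, hpow⟩ := Finite.exists_ne_map_eq_of_infinite (fun n : ℕ => a ^ n)
  wlog hlt : m < n generalizing m n
  · exact this n m hmn.symm hpow.symm (by omega)
  set d := n - m with hd
  have hd1 : 1 ≤ d := by omega
  have hn : n = m + d := by omega
  have claim : ∀ t : ℕ, a ^ m = a ^ (m + t * d) := by
    intro t
    induction t with
    | zero => simp
    | succ t ih =>
      have e2 : m + (t + 1) * d = n + t * d := by rw [hn]; ring
      rw [e2, pow_add, ← hpow, ← pow_add]
      exact ih
  have hC := claim (m + 1)
  rw [Nat.succ_mul] at hC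
  have hmd : m ≤ m * d := Nat.le_mul_of_pos_right m hd1
  set p := m * d with hp
  set k := p + d with hk
  have hmk : m ≤ k := by omega
  have hk1 : 1 ≤ k := by omega
  -- a^k is idempotent
  have hidem : a ^ k * a ^ k = a ^ k := by
    have h3 : a ^ (m + k) * a ^ (k - m) = a ^ m * a ^ (k - m) := by rw [← hC]
    rw [← pow_add, ← pow_add] at h3
    have e1 : m + k + (k - m) = k + k := by omega
    have e2 : m + (k - m) = k := by omega
    rw [e1, e2] at h3
    rw [← pow_add]
    exact h3
  -- a = a^k * (a * b^k)
  have hA : a = a ^ k * (a * b ^ k) := by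
    rw [← mul_assoc, ← pow_succ]
    exact (fam k).symm
  -- a^k * a = a
  have hea : a ^ k * a = a := by
    calc a ^ k * a = a ^ k * (a ^ k * (a * b ^ k)) := by rw [← hA]
      _ = (a ^ k * a ^ k) * (a * b ^ k) := (mul_assoc _ _ _).symm
      _ = a ^ k * (a * b ^ k) := by rw [hidem]
      _ = a := hA.symm
  -- a^k = a * b
  have hab : a ^ k = a * b := by
    have hk2 : k - 1 + 1 = k := by omega
    calc a ^ k = a ^ (k - 1) * a := by rw [← pow_succ, hk2]
      _ = a ^ (k - 1) * (a * a * b) := by rw [h]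
      _ = (a ^ (k - 1) * a) * (a * b) := by simp [mul_assoc]
      _ = a ^ k * (a * b) := by rw [← pow_succ, hk2]
      _ = (a ^ k * a) * b := (mul_assoc _ _ _).symm
      _ = a * b := by rw [hea]
  calc a * b * a = a ^ k * a := by rw [← hab]
    _ = a := hea

/-- In a finite semigroup, `a * a * b = a` implies `a * b * a = a`. -/
lemma key_semigroup {F : Type} [Semigroup F] [Fintype F] (a b : F)
    (h : a * a * b = a) : a * b * a = a := by
  haveI : Finite (WithOne F) := inferInstanceAs (Finite (Option F))
  have h' : (a : WithOne F) * a * b = a := by exact_mod_cast h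
  have := key_monoid (a : WithOne F) (b : WithOne F) h'
  exact_mod_cast this

/-- If a semigroup `S` contains elements `x, y` with `x * x * y = x` and `x * y * x ≠ x`, then
`S` is not LEF: there is a finite subset `H` of `S` (namely `H = {x, y, x*y, x*y*x}`) for which
no finite semigroup `F` and function `f : S → F` injective on `H` satisfy
`f (u * v) = f u * f v` for all `u, v ∈ H` with `u * v ∈ H`. -/
theorem not_lef_of_xxy_eq_x (S : Type*) [Semigroup S] (x y : S)
    (h1 : x * x * y = x) (h2 : x * y * x ≠ x) :
    ∃ H : Finset S, (↑H : Set S) = {x, y, x * y, x * y * x} ∧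
      ¬ ∃ (F : Type) (_ : Semigroup F) (_ : Fintype F) (f : S → F),
        Set.InjOn f ↑H ∧
          ∀ u ∈ H, ∀ v ∈ H, u * v ∈ H → f (u * v) = f u * f v := by
  classical
  refine ⟨{x, y, x * y, x * y * x}, by simp, ?_⟩
  rintro ⟨F, _instF, _finF, f, hinj, hmul⟩
  have hx : x ∈ ({x, y, x * y, x * y * x} : Finset S) := by simp
  have hy : y ∈ ({x, y, x * y, x * y * x} : Finset S) := by simp
  have hxy : x * y ∈ ({x, y, x * y, x * y * x} : Finset S) := by simp
  have hxyx : x * y * x ∈ ({x, y, x * y, x * y * x} : Finset S) := by simp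
  have e1 : f (x * y) = f x * f y := hmul x hx y hy hxy
  have hxxy : x * (x * y) = x := by rw [← mul_assoc]; exact h1
  have e2 : f x = f x * f (x * y) := by
    have := hmul x hx (x * y) hxy (by rw [hxxy]; exact hx)
    rw [hxxy] at this
    exact this
  have e3 : f (x * y * x) = f (x * y) * f x := hmul (x * y) hxy x hx hxyx
  have h4 : f x * f x * f y = f x := by rw [mul_assoc, ← e1, ← e2]
  have h5 : f x * f y * f x = f x := key_semigroup (f x) (f y) h4
  have h6 : f (x * y * x) = f x := by rw [e3, e1]; exact h5
  exact h2 (hinj (by simp) (by simp) h6)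
end

section
/- Let S be an infinite LWF semigroup, H = {h_1, …, h_t} a finite subset of S, (D, d) a tight pair for H, and h'_1, …, h'_t elements of D with d(h'_i) = h_i for each i. Define a predicate Accurate on D inductively: each h'_i is Accurate, and if u and v are Accurate and d(u*v) ∈ H, then u*v is Accurate. Then every element w' ∈ D with d(w') ∈ H is Accurate, i.e., can be written as an accurate product of the elements h'_1, …, h'_t. -/
/-- Accurate products of the chosen preimages `gens`: every chosen preimage is accurate,
and a product `u * v` of accurate elements with `d (u * v) ∈ H` is accurate. -/
inductive Accurate {D S : Type*} [Semigroup D] (d : D → S) (H : Set S) (gens : Set D) :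
    D → Prop
  | base {g : D} : g ∈ gens → Accurate d H gens g
  | mul {u v : D} : Accurate d H gens u → Accurate d H gens v → d (u * v) ∈ H →
      Accurate d H gens (u * v)

/-- Let `S` be an infinite LWF semigroup, `H` a finite subset of `S`, `(D, d)` a tight pair
for `H`, and `gens : H → D` a choice of preimages under `d` of the elements of `H`.
Then every `w' ∈ D` with `d w' ∈ H` is an accurate product of the chosen preimages. -/
theorem tight_pair_accurate (S : Type*) [Semigroup S] [Infinite S] (hS : IsLWF S)
    (H : Finset S) (D : Type) [Semigroup D] [Fintype D] (d : D → S)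
    (hcover : ↑H ⊆ Set.range d)
    (hmul : ∀ x' y' : D, d x' ∈ H → d y' ∈ H → d (x' * y') = d x' * d y')
    (htight : ¬ ∃ r : D → S,
      ((↑H ⊆ Set.range r) ∧
        ∀ x' y' : D, r x' ∈ H → r y' ∈ H → r (x' * y') = r x' * r y') ∧
      r ⁻¹' ↑H ⊂ d ⁻¹' ↑H)
    (gens : H → D) (hgens : ∀ h : H, d (gens h) = ↑h) :
    ∀ w' : D, d w' ∈ H → Accurate d ↑H (Set.range gens) w' := by
  by_contra hw
  push_neg at hw
  obtain ⟨w', hwH, hwA⟩ := hw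
  obtain ⟨s0, hs0⟩ := H.exists_notMem
  classical
  set A := Accurate d (↑H : Set S) (Set.range gens) with hA
  refine htight ⟨fun x => if d x ∈ H ∧ ¬ A x then s0 else d x, ⟨?_, ?_⟩, ?_, ?_⟩
  · intro h hh
    refine ⟨gens ⟨h, hh⟩, ?_⟩
    have hacc : A (gens ⟨h, hh⟩) := Accurate.base ⟨⟨h, hh⟩, rfl⟩
    simp [hacc, hgens ⟨h, hh⟩]
  · intro x y hx hy
    dsimp only at hx hy ⊢
    by_cases hax : d x ∈ H ∧ ¬ A x
    · rw [if_pos hax] at hx; exact absurd hx hs0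
    by_cases hay : d y ∈ H ∧ ¬ A y
    · rw [if_pos hay] at hy; exact absurd hy hs0
    simp only [if_neg hax, if_neg hay] at hx hy ⊢
    push_neg at hax hay
    have hm := hmul x y hx hy
    by_cases hxy : d (x * y) ∈ H
    · have : A (x * y) := Accurate.mul (hax hx) (hay hy) hxy
      simp [this, hm]
    · simp only [if_neg (fun h : d (x*y) ∈ H ∧ ¬ A (x*y) => hxy h.1)]; exact hm
  · intro x hx
    simp only [Set.mem_preimage, Finset.mem_coe] at hx ⊢
    by_cases hax : d x ∈ H ∧ ¬ A x
    · rw [if_pos hax] at hx; exact absurd hx hs0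
    · simpa [hax] using hx
  · intro hsub
    have := hsub (show w' ∈ d ⁻¹' ↑H from hwH)
    simp only [Set.mem_preimage, Finset.mem_coe, Finset.coe_mem] at this
    have : (if d w' ∈ H ∧ ¬ A w' then s0 else d w') ∈ H := this
    rw [if_pos ⟨hwH, hwA⟩] at this
    exact hs0 this
end

section
/- Let S be an inverse semigroup (a semigroup in which every element x has a unique y with x*y*x = x and y*x*y = y). Then S is an LEF semigroup if and only if S is an iLEF semigroup, i.e., for every finite subset H of S there exist a finite inverse semigroup F and an injective function f : H → F such that for all x, y ∈ H with x*y ∈ H, f(x*y) = f(x)*f(y). -/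
/-- A semigroup is inverse if every element `x` has a unique `y` with `x*y*x = x` and
`y*x*y = y`. -/
def IsInverseSemigroup (S : Type*) [Semigroup S] : Prop :=
  ∀ x : S, ∃! y : S, x * y * x = x ∧ y * x * y = y

/-- An inverse semigroup `S` is iLEF if the LEF condition holds with the finite semigroup
`F` additionally required to be inverse. -/
def IsiLEF (S : Type*) [Semigroup S] : Prop :=
  ∀ H : Finset S, ∃ (F : Type) (_ : Semigroup F) (_ : Fintype F) (f : S → F),
    IsInverseSemigroup F ∧ Set.InjOn f ↑H ∧
      ∀ x ∈ H, ∀ y ∈ H, x * y ∈ H → f (x * y) = f x * f y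

/-! ### Auxiliary material -/

section SinvAPI

variable {S : Type*} [Semigroup S]

/-- The inverse of an element in an inverse semigroup. -/
noncomputable def sinv (hinv : IsInverseSemigroup S) (x : S) : S :=
  (hinv x).exists.choose

theorem sinv_spec1 (hinv : IsInverseSemigroup S) (x : S) :
    x * sinv hinv x * x = x :=
  (hinv x).exists.choose_spec.1

theorem sinv_spec2 (hinv : IsInverseSemigroup S) (x : S) :
    sinv hinv x * x * sinv hinv x = sinv hinv x :=
  (hinv x).exists.choose_spec.2

theorem idem_right (hinv : IsInverseSemigroup S) (x : S) :
    (x * sinv hinv x) * (x * sinv hinv x) = x * sinv hinv x := by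
  rw [← mul_assoc, sinv_spec1]

theorem idem_left (hinv : IsInverseSemigroup S) (x : S) :
    (sinv hinv x * x) * (sinv hinv x * x) = sinv hinv x * x := by
  rw [← mul_assoc, sinv_spec2]

/-- In an inverse semigroup, the product of idempotents is idempotent. -/
theorem isInv_prod_idem (hinv : IsInverseSemigroup S) {e f : S}
    (he : e * e = e) (hf : f * f = f) : (e * f) * (e * f) = e * f := by
  obtain ⟨y, ⟨s1, s2⟩, huniq⟩ := hinv (e * f)
  have hw : f * (y * e) = y := by
    refine huniq _ ⟨?_, ?_⟩
    · calc (e*f) * (f*(y*e)) * (e*f) = e*((f*f)*(y*((e*e)*f))) := by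
            simp only [mul_assoc]
        _ = e*(f*(y*(e*f))) := by rw [he, hf]
        _ = (e*f)*y*(e*f) := by simp only [mul_assoc]
        _ = e*f := s1
    · calc (f*(y*e)) * (e*f) * (f*(y*e)) = f*(y*((e*e)*((f*f)*(y*e)))) := by
            simp only [mul_assoc]
        _ = f*(y*(e*(f*(y*e)))) := by rw [he, hf]
        _ = f*((y*(e*f)*y)*e) := by simp only [mul_assoc]
        _ = f*(y*e) := by rw [s2]
  have hyy : y * y = y := by
    calc y*y = (f*(y*e))*(f*(y*e)) := by rw [hw]
      _ = f*((y*(e*f)*y)*e) := by simp only [mul_assoc]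
      _ = f*(y*e) := by rw [s2]
      _ = y := hw
  obtain ⟨w, _, huy⟩ := hinv y
  have h1 : e * f = w := huy (e*f) ⟨s2, s1⟩
  have h2 : y = w := huy y ⟨by rw [hyy, hyy], by rw [hyy, hyy]⟩
  have hef : e * f = y := h1.trans h2.symm
  rw [hef, hyy]

/-- In an inverse semigroup, idempotents commute. -/
theorem sidem_comm (hinv : IsInverseSemigroup S) {e f : S}
    (he : e * e = e) (hf : f * f = f) : e * f = f * e := by
  have hef := isInv_prod_idem hinv he hf
  have hfe := isInv_prod_idem hinv hf he
  obtain ⟨y, ⟨s1, s2⟩, huniq⟩ := hinv (e * f)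
  have h1 : f * e = y := by
    refine huniq _ ⟨?_, ?_⟩
    · calc (e*f)*(f*e)*(e*f) = e*((f*f)*((e*e)*f)) := by simp only [mul_assoc]
        _ = e*(f*(e*f)) := by rw [he, hf]
        _ = (e*f)*(e*f) := by simp only [mul_assoc]
        _ = e*f := hef
    · calc (f*e)*(e*f)*(f*e) = f*((e*e)*((f*f)*e)) := by simp only [mul_assoc]
        _ = f*(e*(f*e)) := by rw [he, hf]
        _ = (f*e)*(f*e) := by simp only [mul_assoc]
        _ = f*e := hfe
  have h2 : e * f = y := huniq _ ⟨by rw [hef, hef], by rw [hef, hef]⟩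
  rw [h2, h1]

theorem sinv_mul (hinv : IsInverseSemigroup S) (x y : S) :
    sinv hinv (x * y) = sinv hinv y * sinv hinv x := by
  refine (hinv (x*y)).unique ⟨sinv_spec1 hinv (x*y), sinv_spec2 hinv (x*y)⟩ ⟨?_, ?_⟩
  · calc (x*y)*(sinv hinv y*sinv hinv x)*(x*y)
        = x*((y*sinv hinv y)*(sinv hinv x*x)*y) := by simp only [mul_assoc]
      _ = x*((sinv hinv x*x)*(y*sinv hinv y)*y) := by
          rw [sidem_comm hinv (idem_right hinv y) (idem_left hinv x)]
      _ = (x*sinv hinv x*x)*(y*sinv hinv y*y) := by simp only [mul_assoc]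
      _ = x*y := by rw [sinv_spec1, sinv_spec1]
  · calc (sinv hinv y*sinv hinv x)*(x*y)*(sinv hinv y*sinv hinv x)
        = sinv hinv y*((sinv hinv x*x)*(y*sinv hinv y)*sinv hinv x) := by
          simp only [mul_assoc]
      _ = sinv hinv y*((y*sinv hinv y)*(sinv hinv x*x)*sinv hinv x) := by
          rw [sidem_comm hinv (idem_left hinv x) (idem_right hinv y)]
      _ = (sinv hinv y*y*sinv hinv y)*(sinv hinv x*x*sinv hinv x) := by
          simp only [mul_assoc]
      _ = sinv hinv y*sinv hinv x := by rw [sinv_spec2, sinv_spec2]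

end SinvAPI

/-- A general uniqueness lemma: if idempotents commute, inverses are unique. -/
theorem inv_unique_of_comm {T : Type*} [Semigroup T]
    (hc : ∀ e f : T, e * e = e → f * f = f → e * f = f * e)
    {x y z : T} (h1 : x * y * x = x) (h2 : y * x * y = y)
    (h3 : x * z * x = x) (h4 : z * x * z = z) : y = z := by
  have iyx : (y*x)*(y*x) = y*x := by rw [← mul_assoc, h2]
  have izx : (z*x)*(z*x) = z*x := by rw [← mul_assoc, h4]
  have ixy : (x*y)*(x*y) = x*y := by rw [← mul_assoc, h1]
  have ixz : (x*z)*(x*z) = x*z := by rw [← mul_assoc, h3]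
  have e1 : y = z*x*y := by
    calc y = y*x*y := h2.symm
      _ = y*((x*z*x)*y) := by rw [h3, ← mul_assoc]
      _ = (y*x)*(z*x)*y := by simp only [mul_assoc]
      _ = (z*x)*(y*x)*y := by rw [hc _ _ iyx izx]
      _ = z*x*(y*x*y) := by simp only [mul_assoc]
      _ = z*x*y := by rw [h2]
  have e2 : z = z*x*y := by
    calc z = z*x*z := h4.symm
      _ = z*((x*y*x)*z) := by rw [h1, ← mul_assoc]
      _ = z*(x*y)*(x*z) := by simp only [mul_assoc]
      _ = z*(x*z)*(x*y) := by rw [mul_assoc z (x*y) (x*z), hc _ _ ixy ixz, ← mul_assoc]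
      _ = (z*x*z)*(x*y) := by simp only [mul_assoc]
      _ = z*(x*y) := by rw [h4]
      _ = z*x*y := by rw [← mul_assoc]
  rw [e1, ← e2]

/-! ### The finite inverse semigroup of partial injective maps -/

/-- The semigroup of partial injective maps on `F` (encoded as maps `Option F → Option F`
fixing `none` and injective away from `none`). -/
def PInj (F : Type) : Type :=
  {g : Option F → Option F // g none = none ∧
    ∀ u v, g u = g v → g u ≠ none → u = v}

namespace PInj

instance (F : Type) : Mul (PInj F) :=
  ⟨fun x y => ⟨fun u => y.1 (x.1 u), by
    simp [x.2.1, y.2.1], by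
    intro u v h hne
    dsimp only at h hne
    have hxne : x.1 u ≠ none := by
      intro h0
      rw [h0, y.2.1] at hne
      exact hne rfl
    exact x.2.2 u v (y.2.2 (x.1 u) (x.1 v) h hne) hxne⟩⟩

@[simp] theorem mul_apply {F : Type} (x y : PInj F) (u : Option F) :
    (x * y).1 u = y.1 (x.1 u) := rfl

instance (F : Type) : Semigroup (PInj F) where
  mul_assoc a b c := Subtype.ext rfl

noncomputable def fintype (F : Type) [Fintype F] : Fintype (PInj F) := by
  classical
  exact Fintype.ofInjective Subtype.val Subtype.val_injective

theorem idem_fix {F : Type} {g : PInj F} (hg : g * g = g) :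
    ∀ u, g.1 u ≠ none → g.1 u = u := by
  intro u hne
  have h : g.1 (g.1 u) = g.1 u := congrFun (congrArg Subtype.val hg) u
  exact g.2.2 (g.1 u) u h (by rw [h]; exact hne)

theorem idem_comm {F : Type} {g h : PInj F} (hg : g * g = g) (hh : h * h = h) :
    g * h = h * g := by
  apply Subtype.ext
  funext u
  show h.1 (g.1 u) = g.1 (h.1 u)
  by_cases hgu : g.1 u = none
  · by_cases hhu : h.1 u = none
    · rw [hgu, hhu, g.2.1, h.2.1]
    · rw [hgu, h.2.1, idem_fix hh u hhu, hgu]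
  · by_cases hhu : h.1 u = none
    · rw [hhu, g.2.1, idem_fix hg u hgu, hhu]
    · rw [idem_fix hh u hhu, idem_fix hg u hgu]
      exact idem_fix hh u hhu

open Classical in
/-- The inverse of a partial injective map. -/
noncomputable def pinv {F : Type} (g : PInj F) : PInj F :=
  ⟨fun v => if h : ∃ u, g.1 u = v ∧ v ≠ none ∧ u ≠ none then h.choose else none, by
    dsimp only
    rw [dif_neg]
    rintro ⟨u, _, hv, _⟩
    exact hv rfl, by
    intro v w h hne
    dsimp only at h hne
    by_cases hv : ∃ u, g.1 u = v ∧ v ≠ none ∧ u ≠ none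
    · by_cases hw : ∃ u, g.1 u = w ∧ w ≠ none ∧ u ≠ none
      · rw [dif_pos hv, dif_pos hw] at h
        rw [← hv.choose_spec.1, ← hw.choose_spec.1, h]
      · rw [dif_neg hw] at h
        rw [h] at hne
        exact absurd rfl hne
    · rw [dif_neg hv] at hne
      exact absurd rfl hne⟩

open Classical in
theorem pinv_apply {F : Type} (g : PInj F) (v : Option F) :
    (pinv g).1 v = if h : ∃ u, g.1 u = v ∧ v ≠ none ∧ u ≠ none then h.choose else none :=
  rfl

theorem isInverse (F : Type) : IsInverseSemigroup (PInj F) := by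
  intro g
  have c1 : g * pinv g * g = g := by
    apply Subtype.ext
    funext u
    show g.1 ((pinv g).1 (g.1 u)) = g.1 u
    by_cases hgu : g.1 u = none
    · rw [hgu, (pinv g).2.1, g.2.1]
    · have hune : u ≠ none := by
        intro h0; rw [h0, g.2.1] at hgu; exact hgu rfl
      have hex : ∃ w, g.1 w = g.1 u ∧ g.1 u ≠ none ∧ w ≠ none := ⟨u, rfl, hgu, hune⟩
      rw [pinv_apply, dif_pos hex]
      exact hex.choose_spec.1
  have c2 : pinv g * g * pinv g = pinv g := by
    apply Subtype.ext
    funext v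
    show (pinv g).1 (g.1 ((pinv g).1 v)) = (pinv g).1 v
    by_cases hv : ∃ u, g.1 u = v ∧ v ≠ none ∧ u ≠ none
    · have h1 : (pinv g).1 v = hv.choose := by rw [pinv_apply, dif_pos hv]
      rw [h1, hv.choose_spec.1]
      exact h1
    · have h1 : (pinv g).1 v = none := by rw [pinv_apply, dif_neg hv]
      rw [h1, g.2.1, (pinv g).2.1]
  exact ⟨pinv g, ⟨c1, c2⟩, fun z hz =>
    inv_unique_of_comm (fun e f he hf => idem_comm he hf) hz.1 hz.2 c1 c2⟩

end PInj

/-! ### The Wagner–Preston style partial translation maps -/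

open Classical in
/-- The partial right-translation by `A` with domain `{w : w * A * A' = w}`. -/
noncomputable def phimap {F : Type} [Semigroup F] (A A' : F) : PInj F :=
  ⟨fun u => u.bind fun w => if w * A * A' = w then some (w * A) else none, rfl, by
    intro u v h hne
    match u, v with
    | none, _ => exact absurd h.symm (by simpa using hne)
    | some w, none => simp at h; exact absurd h (by simpa using hne)
    | some w, some w' =>
      simp only [Option.bind_some] at h hne
      by_cases hw : w * A * A' = w
      · by_cases hw' : w' * A * A' = w'
        · rw [if_pos hw, if_pos hw'] at h
          have : w * A = w' * A := Option.some.inj h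
          have : w = w' := by
            rw [← hw, ← hw', this]
          rw [this]
        · rw [if_neg hw'] at h
          rw [h] at hne
          exact absurd rfl hne
      · rw [if_neg hw] at hne
        exact absurd rfl hne⟩

open Classical in
theorem phimap_some {F : Type} [Semigroup F] (A A' w : F) :
    (phimap A A').1 (some w) = if w * A * A' = w then some (w * A) else none :=
  rfl

section DomLemmas

variable {F : Type} [Semigroup F] {A A' B B' EA FB v : F}

theorem dom_forward (h1 : v*A*A' = v) (h2 : v*A*B*B' = v*A) :
    v*(A*B)*(B'*A') = v := by
  calc v*(A*B)*(B'*A') = (v*A*B*B')*A' := by simp only [mul_assoc]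
    _ = (v*A)*A' := by rw [h2]
    _ = v := h1

theorem dom_back1 (hEA : A'*A = EA) (hFB : B*B' = FB) (hAE : A*EA = A)
    (hcm : FB*EA = EA*FB) (h : v*(A*B)*(B'*A') = v) : v*A*A' = v := by
  calc v*A*A' = (v*(A*B)*(B'*A'))*A*A' := by rw [h]
    _ = v*A*(B*B')*((A'*A)*A') := by simp only [mul_assoc]
    _ = v*A*FB*(EA*A') := by rw [hFB, hEA]
    _ = v*A*(FB*EA)*A' := by simp only [mul_assoc]
    _ = v*A*(EA*FB)*A' := by rw [hcm]
    _ = (v*(A*EA))*FB*A' := by simp only [mul_assoc]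
    _ = v*A*FB*A' := by rw [hAE]
    _ = v*(A*B)*(B'*A') := by rw [← hFB]; simp only [mul_assoc]
    _ = v := h

theorem dom_back2 (hEA : A'*A = EA) (hFB : B*B' = FB) (hAE : A*EA = A)
    (hcm : FB*EA = EA*FB) (h : v*(A*B)*(B'*A') = v) : v*A*B*B' = v*A := by
  have aux : v*A = v*A*FB := by
    calc v*A = (v*(A*B)*(B'*A'))*A := by rw [h]
      _ = v*A*(B*B')*(A'*A) := by simp only [mul_assoc]
      _ = v*A*FB*EA := by rw [hFB, hEA]
      _ = v*A*(FB*EA) := by simp only [mul_assoc]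
      _ = v*A*(EA*FB) := by rw [hcm]
      _ = v*(A*EA)*FB := by simp only [mul_assoc]
      _ = v*A*FB := by rw [hAE]
  calc v*A*B*B' = v*A*(B*B') := by simp only [mul_assoc]
    _ = v*A*FB := by rw [hFB]
    _ = v*A := aux.symm

end DomLemmas

theorem phimap_mul {F : Type} [Semigroup F] {A A' B B' EA FB : F}
    (hEA : A'*A = EA) (hFB : B*B' = FB) (hAE : A*EA = A)
    (hcm : FB*EA = EA*FB) :
    phimap (A*B) (B'*A') = phimap A A' * phimap B B' := by
  apply Subtype.ext
  funext u
  cases u with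
  | none => rfl
  | some v =>
    show (phimap (A*B) (B'*A')).1 (some v) = (phimap B B').1 ((phimap A A').1 (some v))
    rw [phimap_some, phimap_some]
    by_cases h : v*(A*B)*(B'*A') = v
    · have h1 := dom_back1 hEA hFB hAE hcm h
      have h2 := dom_back2 hEA hFB hAE hcm h
      rw [if_pos h, if_pos h1, phimap_some, if_pos h2, mul_assoc]
    · rw [if_neg h]
      by_cases h1 : v*A*A' = v
      · rw [if_pos h1, phimap_some, if_neg (fun h2 => h (dom_forward h1 h2))]
      · rw [if_neg h1]
        rfl

open scoped Pointwise in
/-- An inverse semigroup is an LEF semigroup iff it is an iLEF semigroup. -/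
theorem inverse_isLEF_iff_isiLEF (S : Type*) [Semigroup S]
    (hinv : IsInverseSemigroup S) : IsLEF S ↔ IsiLEF S := by
  constructor
  · intro hL H
    classical
    set T : Finset S := H ∪ H.image (sinv hinv) with hT
    set K : Finset S := T ∪ T * T ∪ T * T * T * T with hK
    obtain ⟨F, iS, iF, f, finj, fmul⟩ := hL K
    have mH : ∀ {x : S}, x ∈ H → x ∈ T := fun hx => by
      rw [hT]; exact Finset.mem_union_left _ hx
    have mI : ∀ {x : S}, x ∈ H → sinv hinv x ∈ T := fun hx => by
      rw [hT]; exact Finset.mem_union_right _ (Finset.mem_image_of_mem _ hx)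
    have mK1 : ∀ {x : S}, x ∈ T → x ∈ K := fun hx => by
      rw [hK]; exact Finset.mem_union_left _ (Finset.mem_union_left _ hx)
    have mK2 : ∀ {x y : S}, x ∈ T → y ∈ T → x * y ∈ K := fun hx hy => by
      rw [hK]
      exact Finset.mem_union_left _ (Finset.mem_union_right _ (Finset.mul_mem_mul hx hy))
    have mK4 : ∀ {x y z w : S}, x ∈ T → y ∈ T → z ∈ T → w ∈ T → x * y * z * w ∈ K :=
      fun hx hy hz hw => by
      rw [hK]
      exact Finset.mem_union_right _
        (Finset.mul_mem_mul (Finset.mul_mem_mul (Finset.mul_mem_mul hx hy) hz) hw)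
    refine ⟨PInj F, inferInstance, PInj.fintype F,
      fun a => phimap (f a) (f (sinv hinv a)), PInj.isInverse F, ?_, ?_⟩
    · -- injectivity on H
      have key : ∀ x, x ∈ H → ∀ y, y ∈ H →
          phimap (f x) (f (sinv hinv x)) = phimap (f y) (f (sinv hinv y)) →
          x * sinv hinv x * y = x := by
        intro x hx y hy hxy
        have hxK := mK1 (mH hx)
        have hixK := mK1 (mI hx)
        have hyK := mK1 (mH hy)
        have hixxK : sinv hinv x * x ∈ K := mK2 (mI hx) (mH hx)
        have hixyK : sinv hinv x * y ∈ K := mK2 (mI hx) (mH hy)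
        have e1 : f (sinv hinv x) * f x = f (sinv hinv x * x) :=
          (fmul _ hixK x hxK hixxK).symm
        have e2 : f (sinv hinv x * x) * f (sinv hinv x) = f (sinv hinv x) := by
          have e3 : (sinv hinv x * x) * sinv hinv x = sinv hinv x := sinv_spec2 hinv x
          have h := fmul _ hixxK _ hixK (by rw [e3]; exact hixK)
          rw [e3] at h
          exact h.symm
        have ca : f (sinv hinv x) * f x * f (sinv hinv x) = f (sinv hinv x) := by
          rw [e1, e2]
        have happ := congrFun (congrArg Subtype.val hxy) (some (f (sinv hinv x)))
        rw [phimap_some, phimap_some, if_pos ca] at happ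
        by_cases cb : f (sinv hinv x) * f y * f (sinv hinv y) = f (sinv hinv x)
        · rw [if_pos cb] at happ
          have e4 : f (sinv hinv x) * f y = f (sinv hinv x * y) :=
            (fmul _ hixK y hyK hixyK).symm
          have e5 : f (sinv hinv x * x) = f (sinv hinv x * y) := by
            rw [← e1, ← e4]
            exact Option.some.inj happ
          have e6 : sinv hinv x * x = sinv hinv x * y :=
            finj (Finset.mem_coe.mpr hixxK) (Finset.mem_coe.mpr hixyK) e5
          calc x * sinv hinv x * y = x * (sinv hinv x * y) := by rw [mul_assoc]
            _ = x * (sinv hinv x * x) := by rw [← e6]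
            _ = x := by rw [← mul_assoc, sinv_spec1]
        · rw [if_neg cb] at happ
          exact absurd happ (by simp)
      intro a ha b hb h
      have h1 := key a (Finset.mem_coe.mp ha) b (Finset.mem_coe.mp hb) h
      have h2 := key b (Finset.mem_coe.mp hb) a (Finset.mem_coe.mp ha) h.symm
      calc a = a * sinv hinv a * b := h1.symm
        _ = a * sinv hinv a * (b * sinv hinv b * a) := by rw [h2]
        _ = (a * sinv hinv a) * (b * sinv hinv b) * a := by simp only [mul_assoc]
        _ = (b * sinv hinv b) * (a * sinv hinv a) * a := by
            rw [sidem_comm hinv (idem_right hinv a) (idem_right hinv b)]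
        _ = b * sinv hinv b * (a * sinv hinv a * a) := by simp only [mul_assoc]
        _ = b * sinv hinv b * a := by rw [sinv_spec1]
        _ = b := h2
    · -- multiplicativity on H
      intro a ha b hb hab
      have haK := mK1 (mH ha)
      have hbK := mK1 (mH hb)
      have habK := mK1 (mH hab)
      have hiaK := mK1 (mI ha)
      have hibK := mK1 (mI hb)
      have hiaaK : sinv hinv a * a ∈ K := mK2 (mI ha) (mH ha)
      have hbibK : b * sinv hinv b ∈ K := mK2 (mH hb) (mI hb)
      have F1 : f (a * b) = f a * f b := fmul a haK b hbK habK
      have F2 : f (sinv hinv (a * b)) = f (sinv hinv b) * f (sinv hinv a) := by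
        rw [sinv_mul hinv a b]
        exact fmul _ hibK _ hiaK (mK2 (mI hb) (mI ha))
      have F3 : f (sinv hinv a) * f a = f (sinv hinv a * a) :=
        (fmul _ hiaK a haK hiaaK).symm
      have F4 : f b * f (sinv hinv b) = f (b * sinv hinv b) :=
        (fmul b hbK _ hibK hbibK).symm
      have F5 : f a * f (sinv hinv a * a) = f a := by
        have e : a * (sinv hinv a * a) = a := by rw [← mul_assoc, sinv_spec1]
        have h := fmul a haK (sinv hinv a * a) hiaaK (by rw [e]; exact haK)
        rw [e] at h
        exact h.symm
      have hm1 : (b * sinv hinv b) * (sinv hinv a * a) ∈ K := by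
        rw [← mul_assoc]
        exact mK4 (mH hb) (mI hb) (mI ha) (mH ha)
      have hm2 : (sinv hinv a * a) * (b * sinv hinv b) ∈ K := by
        rw [← mul_assoc]
        exact mK4 (mI ha) (mH ha) (mH hb) (mI hb)
      have F6 : f (b * sinv hinv b) * f (sinv hinv a * a)
          = f (sinv hinv a * a) * f (b * sinv hinv b) := by
        rw [← fmul _ hbibK _ hiaaK hm1, ← fmul _ hiaaK _ hbibK hm2,
          sidem_comm hinv (idem_right hinv b) (idem_left hinv a)]
      show phimap (f (a * b)) (f (sinv hinv (a * b))) = _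
      rw [F1, F2]
      exact phimap_mul F3 F4 F5 F6
  · intro h H
    obtain ⟨F, i1, i2, f, _, hinj, hm⟩ := h H
    exact ⟨F, i1, i2, f, hinj, hm⟩
end

section
/- Let S be an infinite iLWF inverse semigroup, let K be a finite symmetrised subset of S (i.e., K⁻¹ = K, K*K⁻¹ ⊆ K and K⁻¹*K ⊆ K), and let (D, d) be a tight pair for K in which D is a finite inverse semigroup. Then for every w' ∈ D with d(w') ∈ K, one has d(w')⁻¹ = d(w'⁻¹), where w'⁻¹ is the inverse of w' in D and d(w')⁻¹ is the inverse of d(w') in S. -/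
open Pointwise

/-- An inverse semigroup: a semigroup with an inverse operation `x ↦ x⁻¹` such that
`x⁻¹` is the unique element `y` with `x * y * x = x` and `y * x * y = y`. -/
class InverseSemigroup (S : Type*) extends Semigroup S, Inv S where
  mul_inv_mul : ∀ x : S, x * x⁻¹ * x = x
  inv_mul_inv : ∀ x : S, x⁻¹ * x * x⁻¹ = x⁻¹
  inv_unique : ∀ x y : S, x * y * x = x → y * x * y = y → y = x⁻¹

/-- An inverse semigroup `S` is iLWF if for every finite subset `H` of `S` there exist a
finite inverse semigroup `D` and a function `d : D → S` such that `H ⊆ d(D)` and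
`d (x' * y') = d x' * d y'` whenever `d x', d y' ∈ H`. -/
def IsiLWF (S : Type*) [InverseSemigroup S] : Prop :=
  ∀ H : Finset S, ∃ (D : Type) (_ : InverseSemigroup D) (_ : Fintype D) (d : D → S),
    (↑H ⊆ Set.range d) ∧
      ∀ x' y' : D, d x' ∈ H → d y' ∈ H → d (x' * y') = d x' * d y'

section ISAux
variable {α : Type*} [InverseSemigroup α]

open InverseSemigroup

lemma IS_inv_inv (x : α) : x⁻¹⁻¹ = x :=
  (inv_unique x⁻¹ x (inv_mul_inv x) (mul_inv_mul x)).symm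

lemma IS_idem_inv {e : α} (he : e * e = e) : e⁻¹ = e :=
  (inv_unique e e (by rw [he, he]) (by rw [he, he])).symm

lemma IS_mulinv_idem (x : α) : (x * x⁻¹) * (x * x⁻¹) = x * x⁻¹ := by
  have h := mul_inv_mul x
  calc (x * x⁻¹) * (x * x⁻¹) = (x * x⁻¹ * x) * x⁻¹ := by simp [mul_assoc]
  _ = x * x⁻¹ := by rw [h]

lemma IS_invmul_idem (x : α) : (x⁻¹ * x) * (x⁻¹ * x) = x⁻¹ * x := by
  have h := inv_mul_inv x
  calc (x⁻¹ * x) * (x⁻¹ * x) = (x⁻¹ * x * x⁻¹) * x := by simp [mul_assoc]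
  _ = x⁻¹ * x := by rw [h]

lemma IS_idem_mul_idem {e f : α} (he : e * e = e) (hf : f * f = f) :
    (e * f) * (e * f) = e * f := by
  set a := (e * f)⁻¹ with ha
  have h1 : (e * f) * a * (e * f) = e * f := mul_inv_mul (e * f)
  have h2 : a * (e * f) * a = a := inv_mul_inv (e * f)
  have key : f * (a * (e * f) * a) * e = f * a * e := by rw [h2]
  have hb : f * a * e = a := by
    refine inv_unique (e * f) (f * a * e) ?_ ?_
    · calc (e * f) * (f * a * e) * (e * f)
          = e * ((f * f) * (a * ((e * e) * f))) := by simp [mul_assoc]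
        _ = e * (f * (a * (e * f))) := by rw [he, hf]
        _ = (e * f) * a * (e * f) := by simp [mul_assoc]
        _ = e * f := h1
    · calc (f * a * e) * (e * f) * (f * a * e)
          = f * (a * ((e * e) * ((f * f) * a))) * e := by simp [mul_assoc]
        _ = f * (a * (e * (f * a))) * e := by rw [he, hf]
        _ = f * (a * (e * f) * a) * e := by simp [mul_assoc]
        _ = f * a * e := key
  have haa : a * a = a := by
    conv_lhs => rw [← hb]
    calc (f * a * e) * (f * a * e)
        = f * (a * (e * f) * a) * e := by simp [mul_assoc]
      _ = f * a * e := key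
      _ = a := hb
  have hefa : e * f = a := by
    have h3 := IS_idem_inv haa
    rw [ha] at h3
    rw [IS_inv_inv] at h3
    rw [h3, ← ha]
  rw [hefa]; exact haa

lemma IS_idem_comm {e f : α} (he : e * e = e) (hf : f * f = f) : e * f = f * e := by
  have hef := IS_idem_mul_idem he hf
  have hfe := IS_idem_mul_idem hf he
  have h : f * e = (e * f)⁻¹ := by
    refine inv_unique (e * f) (f * e) ?_ ?_
    · calc (e * f) * (f * e) * (e * f)
          = e * ((f * f) * ((e * e) * f)) := by simp [mul_assoc]
        _ = e * (f * (e * f)) := by rw [he, hf]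
        _ = (e * f) * (e * f) := by simp [mul_assoc]
        _ = e * f := hef
    · calc (f * e) * (e * f) * (f * e)
          = f * ((e * e) * ((f * f) * e)) := by simp [mul_assoc]
        _ = f * (e * (f * e)) := by rw [he, hf]
        _ = (f * e) * (f * e) := by simp [mul_assoc]
        _ = f * e := hfe
  rw [h, IS_idem_inv hef]

lemma IS_mul_inv (x y : α) : (x * y)⁻¹ = y⁻¹ * x⁻¹ := by
  have hcomm := IS_idem_comm (IS_invmul_idem x) (IS_mulinv_idem y)
  refine (inv_unique (x * y) (y⁻¹ * x⁻¹) ?_ ?_).symm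
  · calc (x * y) * (y⁻¹ * x⁻¹) * (x * y)
        = x * ((y * y⁻¹) * (x⁻¹ * x)) * y := by simp [mul_assoc]
      _ = x * ((x⁻¹ * x) * (y * y⁻¹)) * y := by rw [← hcomm]
      _ = (x * x⁻¹ * x) * (y * y⁻¹ * y) := by simp [mul_assoc]
      _ = x * y := by rw [mul_inv_mul, mul_inv_mul]
  · calc (y⁻¹ * x⁻¹) * (x * y) * (y⁻¹ * x⁻¹)
        = y⁻¹ * ((x⁻¹ * x) * (y * y⁻¹)) * x⁻¹ := by simp [mul_assoc]
      _ = y⁻¹ * ((y * y⁻¹) * (x⁻¹ * x)) * x⁻¹ := by rw [hcomm]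
      _ = (y⁻¹ * y * y⁻¹) * (x⁻¹ * x * x⁻¹) := by simp [mul_assoc]
      _ = y⁻¹ * x⁻¹ := by rw [inv_mul_inv, inv_mul_inv]

end ISAux

/-- `ISpw z n = z^(n+1)` in a semigroup. -/
def ISpw {α : Type*} [Semigroup α] (z : α) : ℕ → α
  | 0 => z
  | n + 1 => ISpw z n * z

lemma ISpw_succ {α : Type*} [Semigroup α] (z : α) (n : ℕ) :
    ISpw z (n + 1) = ISpw z n * z := rfl

lemma ISpw_add {α : Type*} [Semigroup α] (z : α) (m n : ℕ) :
    ISpw z m * ISpw z n = ISpw z (m + n + 1) := by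
  induction n with
  | zero => rfl
  | succ n ih =>
      rw [ISpw_succ, ← mul_assoc, ih]
      rfl

lemma ISpw_period {α : Type*} [Semigroup α] [Finite α] (z : α) :
    ∃ m p, 0 < p ∧ ∀ t s, ISpw z (m + t + s * p) = ISpw z (m + t) := by
  obtain ⟨i, j, hij, hpe⟩ := Finite.exists_ne_map_eq_of_infinite (ISpw z)
  have base : ∀ i j : ℕ, i < j → ISpw z i = ISpw z j →
      ∃ m p, 0 < p ∧ ∀ t s, ISpw z (m + t + s * p) = ISpw z (m + t) := by
    intro i j hlt he
    refine ⟨i, j - i, by omega, ?_⟩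
    have per1 : ∀ t, ISpw z (i + (j - i) + t) = ISpw z (i + t) := by
      intro t
      induction t with
      | zero =>
          have h : i + (j - i) + 0 = j := by omega
          rw [h]
          have h2 : i + 0 = i := by omega
          rw [h2, he]
      | succ t ih =>
          have h : i + (j - i) + (t + 1) = (i + (j - i) + t) + 1 := by omega
          rw [h, ISpw_succ, ih]
          rfl
    intro t s
    induction s with
    | zero => norm_num
    | succ s ih =>
        have h : i + t + (s + 1) * (j - i) = i + (j - i) + (t + s * (j - i)) := by ring
        rw [h, per1 (t + s * (j - i)), ← add_assoc, ih]
  rcases hij.lt_or_gt with h | h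
  · exact base i j h hpe
  · exact base j i h hpe.symm

lemma ISconj1 {α : Type*} [Semigroup α] (u v : α) (a c : ℕ) :
    (ISpw (u * v) a * u) * (v * ISpw (u * v) c) * (ISpw (u * v) a * u)
      = ISpw (u * v) (2 * a + c + 3) * u := by
  have h1 : (ISpw (u * v) a * u) * (v * ISpw (u * v) c) = ISpw (u * v) (a + c + 2) := by
    calc (ISpw (u * v) a * u) * (v * ISpw (u * v) c)
        = (ISpw (u * v) a * (u * v)) * ISpw (u * v) c := by simp [mul_assoc]
      _ = ISpw (u * v) (a + 1) * ISpw (u * v) c := by rw [← ISpw_succ]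
      _ = ISpw (u * v) (a + c + 2) := by
          rw [ISpw_add]
          have h : a + 1 + c + 1 = a + c + 2 := by omega
          rw [h]
  rw [h1, ← mul_assoc, ISpw_add]
  have h : a + c + 2 + a + 1 = 2 * a + c + 3 := by omega
  rw [h]

lemma ISconj2 {α : Type*} [Semigroup α] (u v : α) (a c : ℕ) :
    (v * ISpw (u * v) c) * (ISpw (u * v) a * u) * (v * ISpw (u * v) c)
      = v * ISpw (u * v) (a + 2 * c + 3) := by
  calc (v * ISpw (u * v) c) * (ISpw (u * v) a * u) * (v * ISpw (u * v) c)
      = v * ((ISpw (u * v) c * ISpw (u * v) a) * (u * v) * ISpw (u * v) c) := by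
        simp [mul_assoc]
    _ = v * (ISpw (u * v) (c + a + 1) * (u * v) * ISpw (u * v) c) := by rw [ISpw_add]
    _ = v * (ISpw (u * v) (c + a + 1 + 1) * ISpw (u * v) c) := by rw [← ISpw_succ]
    _ = v * ISpw (u * v) (a + 2 * c + 3) := by
        rw [ISpw_add]
        have h : c + a + 1 + 1 + c + 1 = a + 2 * c + 3 := by omega
        rw [h]

/-- Let `S` be an infinite iLWF inverse semigroup, `K` a finite symmetrised subset of `S`
(`K⁻¹ = K`, `K * K⁻¹ ⊆ K`, `K⁻¹ * K ⊆ K`) and `(D, d)` a tight pair for `K` with `D` a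
finite inverse semigroup. Then `d` is compatible with inverses on `d⁻¹(K)`:
`(d w')⁻¹ = d (w'⁻¹)` for every `w'` with `d w' ∈ K`. -/
theorem tight_pair_inv (S : Type*) [InverseSemigroup S] [Infinite S] (hS : IsiLWF S)
    (K : Finset S)
    (hKinv : (↑K : Set S)⁻¹ = ↑K)
    (hKmul₁ : (↑K : Set S) * (↑K : Set S)⁻¹ ⊆ ↑K)
    (hKmul₂ : (↑K : Set S)⁻¹ * (↑K : Set S) ⊆ ↑K)
    (D : Type) [InverseSemigroup D] [Fintype D] (d : D → S)
    (hcover : ↑K ⊆ Set.range d)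
    (hmul : ∀ x' y' : D, d x' ∈ K → d y' ∈ K → d (x' * y') = d x' * d y')
    (htight : ¬ ∃ r : D → S,
      ((↑K ⊆ Set.range r) ∧
        ∀ x' y' : D, r x' ∈ K → r y' ∈ K → r (x' * y') = r x' * r y') ∧
      r ⁻¹' ↑K ⊂ d ⁻¹' ↑K) :
    ∀ w' : D, d w' ∈ K → (d w')⁻¹ = d w'⁻¹ := by
  classical
  -- closure of K under inverse and multiplication
  have hKinvmem : ∀ {k : S}, k ∈ K → k⁻¹ ∈ K := by
    intro k hk
    have h : k⁻¹ ∈ (↑K : Set S)⁻¹ := by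
      rw [Set.mem_inv, IS_inv_inv]
      exact hk
    rw [hKinv] at h
    exact h
  have hKmulmem : ∀ {a b : S}, a ∈ K → b ∈ K → a * b ∈ K := by
    intro a b ha hb
    have hb' : b ∈ (↑K : Set S)⁻¹ := by
      rw [Set.mem_inv]
      exact hKinvmem hb
    exact hKmul₁ (Set.mul_mem_mul (Finset.mem_coe.2 ha) hb')
  -- key claim: every element of K has a d-preimage whose inverse also maps into K
  have key : ∀ k ∈ K, ∃ x : D, d x = k ∧ d x⁻¹ ∈ K := by
    intro k hk
    obtain ⟨u, hu⟩ := hcover (Finset.mem_coe.2 hk)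
    obtain ⟨v, hv⟩ := hcover (Finset.mem_coe.2 (hKinvmem hk))
    have heK : k * k⁻¹ ∈ K := hKmulmem hk (hKinvmem hk)
    have hee : (k * k⁻¹) * (k * k⁻¹) = k * k⁻¹ := IS_mulinv_idem k
    have hdz : d (u * v) = k * k⁻¹ := by
      rw [hmul u v (by rw [hu]; exact hk) (by rw [hv]; exact hKinvmem hk), hu, hv]
    have hpw : ∀ n, d (ISpw (u * v) n) = k * k⁻¹ := by
      intro n
      induction n with
      | zero => exact hdz
      | succ n ih =>
          rw [ISpw_succ,
            hmul _ _ (by rw [ih]; exact heK) (by rw [hdz]; exact heK), ih, hdz, hee]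
    obtain ⟨m, p, hp, hper⟩ := ISpw_period (u * v)
    obtain ⟨n, rfl⟩ : ∃ n, p = n + 1 := ⟨p - 1, by omega⟩
    obtain ⟨T, hT⟩ : ∃ T, T = (2 * m + 3) * n := ⟨_, rfl⟩
    obtain ⟨Q, hQ⟩ : ∃ Q, Q = (2 * m + 3) * (n + 1) := ⟨_, rfl⟩
    have hTQ : Q = T + (2 * m + 3) := by rw [hT, hQ, Nat.mul_succ]
    -- the exponents
    have hA : ISpw (u * v) (2 * m + (m + T) + 3) = ISpw (u * v) m := by
      have h := hper 0 (2 * m + 3)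
      rw [← hQ] at h
      have hidx : 2 * m + (m + T) + 3 = m + 0 + Q := by omega
      rw [hidx]
      exact h
    have hB : ISpw (u * v) (m + 2 * (m + T) + 3) = ISpw (u * v) (m + T) := by
      have h := hper T (2 * m + 3)
      rw [← hQ] at h
      have hidx : m + 2 * (m + T) + 3 = m + T + Q := by omega
      rw [hidx]
      exact h
    refine ⟨ISpw (u * v) m * u, ?_, ?_⟩
    · rw [hmul _ _ (by rw [hpw]; exact heK) (by rw [hu]; exact hk), hpw, hu]
      exact InverseSemigroup.mul_inv_mul k
    · have hinv : v * ISpw (u * v) (m + T) = (ISpw (u * v) m * u)⁻¹ := by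
        refine InverseSemigroup.inv_unique _ _ ?_ ?_
        · rw [ISconj1, hA]
        · rw [ISconj2, hB]
      rw [← hinv]
      rw [hmul _ _ (by rw [hv]; exact hKinvmem hk) (by rw [hpw]; exact heK), hv, hpw]
      exact hKmulmem (hKinvmem hk) heK
  -- via tightness: d⁻¹(K) is closed under inversion
  have hinvK : ∀ w : D, d w ∈ K → d w⁻¹ ∈ K := by
    by_contra hcon
    push_neg at hcon
    obtain ⟨w₀, hw₀K, hw₀n⟩ := hcon
    obtain ⟨s₀, hs₀⟩ := Infinite.exists_notMem_finset K
    set r : D → S := fun x => if d x ∈ K ∧ d x⁻¹ ∈ K then d x else s₀ with hr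
    have hrK : ∀ x : D, r x ∈ K → (d x ∈ K ∧ d x⁻¹ ∈ K) ∧ r x = d x := by
      intro x hx
      by_cases hc : d x ∈ K ∧ d x⁻¹ ∈ K
      · exact ⟨hc, by rw [hr]; simp only [if_pos hc]⟩
      · exfalso
        apply hs₀
        have : r x = s₀ := by rw [hr]; simp only [if_neg hc]
        rwa [this] at hx
    refine htight ⟨r, ⟨?_, ?_⟩, ?_, ?_⟩
    · -- coverage
      intro k hk
      obtain ⟨x, hx, hxi⟩ := key k (Finset.mem_coe.1 hk)
      refine ⟨x, ?_⟩
      have hc : d x ∈ K ∧ d x⁻¹ ∈ K := ⟨by rw [hx]; exact Finset.mem_coe.1 hk, hxi⟩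
      rw [hr]
      simp only [if_pos hc]
      exact hx
    · -- multiplicativity
      intro x y hx hy
      obtain ⟨⟨hx1, hx2⟩, hxe⟩ := hrK x hx
      obtain ⟨⟨hy1, hy2⟩, hye⟩ := hrK y hy
      have hd : d (x * y) = d x * d y := hmul x y hx1 hy1
      have hc : d (x * y) ∈ K ∧ d (x * y)⁻¹ ∈ K := by
        constructor
        · rw [hd]; exact hKmulmem hx1 hy1
        · rw [IS_mul_inv, hmul _ _ hy2 hx2]
          exact hKmulmem hy2 hx2
      have hxye : r (x * y) = d (x * y) := if_pos hc
      rw [hxye, hd, hxe, hye]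
    · -- r⁻¹(K) ⊆ d⁻¹(K)
      intro x hx
      exact Finset.mem_coe.2 ((hrK x (Finset.mem_coe.1 hx)).1.1)
    · -- not ⊇ : w₀ witnesses
      intro hsub
      have h1 : w₀ ∈ d ⁻¹' ↑K := Finset.mem_coe.2 hw₀K
      have h2 := hsub h1
      have h3 : r w₀ = s₀ := by
        rw [hr]
        simp only [if_neg (fun hc : d w₀ ∈ K ∧ d w₀⁻¹ ∈ K => hw₀n hc.2)]
      rw [Set.mem_preimage, h3] at h2
      exact hs₀ (Finset.mem_coe.1 h2)
  -- conclusion: d is compatible with inverses on d⁻¹(K)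
  intro w hw
  have hw2 : d w⁻¹ ∈ K := hinvK w hw
  have h1 : d (w * w⁻¹) = d w * d w⁻¹ := hmul _ _ hw hw2
  have h1K : d (w * w⁻¹) ∈ K := by rw [h1]; exact hKmulmem hw hw2
  have h2 : d (w * w⁻¹ * w) = d (w * w⁻¹) * d w := hmul _ _ h1K hw
  have h3 : d (w⁻¹ * w) = d w⁻¹ * d w := hmul _ _ hw2 hw
  have h3K : d (w⁻¹ * w) ∈ K := by rw [h3]; exact hKmulmem hw2 hw
  have h4 : d (w⁻¹ * w * w⁻¹) = d (w⁻¹ * w) * d w⁻¹ := hmul _ _ h3K hw2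
  refine (InverseSemigroup.inv_unique (d w) (d w⁻¹) ?_ ?_).symm
  · rw [← h1, ← h2, InverseSemigroup.mul_inv_mul]
  · rw [← h3, ← h4, InverseSemigroup.inv_mul_inv]
end

section
/- Let G be a group such that for every finite subset H of G there exist a finite group D and a function d : D → G with H ⊆ d(D) and d(x'*y') = d(x')*d(y') for all x', y' ∈ D with d(x') ∈ H and d(y') ∈ H (i.e., G is an LWF group). Then G is an LEF group: for every finite subset H of G there exist a finite group F and an injective function f : H → F such that for all x, y ∈ H with x*y ∈ H, f(x*y) = f(x)*f(y). -/
/-- A group `G` is LWF (locally wrapped by the class of finite groups) if for every finite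
subset `H` of `G` there exist a finite group `D` and a function `d : D → G` such that
`H ⊆ d(D)` and `d (x' * y') = d x' * d y'` whenever `d x', d y' ∈ H`. -/
def Group.IsLWF (G : Type*) [Group G] : Prop :=
  ∀ H : Finset G, ∃ (D : Type) (_ : Group D) (_ : Fintype D) (d : D → G),
    (↑H ⊆ Set.range d) ∧
      ∀ x' y' : D, d x' ∈ H → d y' ∈ H → d (x' * y') = d x' * d y'

/-- A group `G` is LEF (locally embeddable into the class of finite groups) if for every
finite subset `H` of `G` there exist a finite group `F` and a function `f : G → F`
injective on `H` such that `f (x * y) = f x * f y` whenever `x, y, x * y ∈ H`. -/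
def Group.IsLEF (G : Type*) [Group G] : Prop :=
  ∀ H : Finset G, ∃ (F : Type) (_ : Group F) (_ : Fintype F) (f : G → F),
    Set.InjOn f ↑H ∧
      ∀ x ∈ H, ∀ y ∈ H, x * y ∈ H → f (x * y) = f x * f y

/-
Enlarge `H` to `K = {1} ∪ H ∪ H⁻¹` and let `d : D → G` wrap `K` with `D` finite. The fibre
`P = d⁻¹(1)` is nonempty and closed under multiplication, hence a subgroup as `D` is finite;
`d` then maps inverses of preimages of `K` to inverses, so two preimages of the same point of `K`
differ by an element of `P`, and every preimage of `K` normalizes `P`. Sending `g ∈ K` to the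
class of one of its preimages in `N(P) ⧸ P` is therefore injective on `K` and multiplicative
whenever the product stays in `K`.
-/

open scoped Pointwise

universe u

section MulClosed

variable {D : Type*} [Group D] {S : Set D}

theorem pow_succ_mem_of_mul_mem (hS : ∀ a ∈ S, ∀ b ∈ S, a * b ∈ S) {a : D}
    (ha : a ∈ S) (n : ℕ) : a ^ (n + 1) ∈ S := by
  induction n with
  | zero => simpa using ha
  | succ n ih => exact pow_succ a (n + 1) ▸ hS _ ih _ ha

variable [Finite D]

theorem one_mem_of_mul_mem (hS : ∀ a ∈ S, ∀ b ∈ S, a * b ∈ S) (hne : S.Nonempty) :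
    (1 : D) ∈ S := by
  obtain ⟨a, ha⟩ := hne
  obtain ⟨n, hn, hpow⟩ := (isOfFinOrder_of_finite a).exists_pow_eq_one
  obtain ⟨m, rfl⟩ := Nat.exists_eq_add_one_of_ne_zero hn.ne'
  exact hpow ▸ pow_succ_mem_of_mul_mem hS ha m

theorem inv_mem_of_mul_mem (hS : ∀ a ∈ S, ∀ b ∈ S, a * b ∈ S) {a : D} (ha : a ∈ S) :
    a⁻¹ ∈ S := by
  obtain ⟨n, hn⟩ := mem_powers_iff_mem_zpowers.2 (inv_mem (Subgroup.mem_zpowers a))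
  rw [← hn]
  cases n with
  | zero => simpa using one_mem_of_mul_mem hS ⟨a, ha⟩
  | succ n => exact pow_succ_mem_of_mul_mem hS ha n

def Subgroup.ofMulClosed (S : Set D) (hne : S.Nonempty) (hS : ∀ a ∈ S, ∀ b ∈ S, a * b ∈ S) :
    Subgroup D where
  carrier := S
  mul_mem' ha hb := hS _ ha _ hb
  one_mem' := one_mem_of_mul_mem hS hne
  inv_mem' := inv_mem_of_mul_mem hS

end MulClosed

structure IsWrapping {D G : Type*} [Mul D] [Mul G] (d : D → G) (K : Set G) : Prop where
  subset_range : K ⊆ Set.range d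
  map_mul : ∀ a b, d a ∈ K → d b ∈ K → d (a * b) = d a * d b

namespace IsWrapping

variable {D : Type u} {G : Type*} [Group D] [Finite D] [Group G] {d : D → G} {K : Set G}

def ker (hd : IsWrapping d K) (h1 : (1 : G) ∈ K) : Subgroup D :=
  Subgroup.ofMulClosed {a | d a = 1}
    (let ⟨e, he⟩ := hd.subset_range h1; ⟨e, he⟩)
    (fun a (ha : d a = 1) b (hb : d b = 1) => by
      show d (a * b) = 1
      rw [hd.map_mul a b (ha ▸ h1) (hb ▸ h1), ha, hb, mul_one])

theorem mem_ker (hd : IsWrapping d K) (h1 : (1 : G) ∈ K) {a : D} :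
    a ∈ hd.ker h1 ↔ d a = 1 :=
  Iff.rfl

theorem map_mul_of_mem_ker (hd : IsWrapping d K) (h1 : (1 : G) ∈ K) {u p : D} (hu : d u ∈ K)
    (hp : p ∈ hd.ker h1) : d (u * p) = d u := by
  rw [mem_ker] at hp
  rw [hd.map_mul u p hu (hp ▸ h1), hp, mul_one]

theorem map_inv (hd : IsWrapping d K) (h1 : (1 : G) ∈ K) (hinv : ∀ k ∈ K, k⁻¹ ∈ K) {u : D}
    (hu : d u ∈ K) : d u⁻¹ = (d u)⁻¹ := by
  obtain ⟨w, hw⟩ := hd.subset_range (hinv _ hu)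
  have huw : u * w ∈ hd.ker h1 := by
    rw [mem_ker, hd.map_mul u w hu (hw ▸ hinv _ hu), hw, mul_inv_cancel]
  calc d u⁻¹ = d (w * (u * w)⁻¹) := by group
    _ = (d u)⁻¹ := by rw [hd.map_mul_of_mem_ker h1 (hw ▸ hinv _ hu) (inv_mem huw), hw]

theorem inv_mul_mem_ker_iff (hd : IsWrapping d K) (h1 : (1 : G) ∈ K) (hinv : ∀ k ∈ K, k⁻¹ ∈ K)
    {u v : D} (hu : d u ∈ K) : u⁻¹ * v ∈ hd.ker h1 ↔ d v = d u := by
  constructor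
  · intro h
    simpa using hd.map_mul_of_mem_ker h1 hu h
  · intro h
    have hu' : d u⁻¹ ∈ K := hd.map_inv h1 hinv hu ▸ hinv _ hu
    rw [mem_ker, hd.map_mul _ _ hu' (h ▸ hu), hd.map_inv h1 hinv hu, h, inv_mul_cancel]

theorem mem_normalizer_ker (hd : IsWrapping d K) (h1 : (1 : G) ∈ K) (hinv : ∀ k ∈ K, k⁻¹ ∈ K)
    {u : D} (hu : d u ∈ K) : u ∈ Subgroup.normalizer (hd.ker h1 : Set D) := by
  refine Subgroup.mem_normalizer_fintype fun p hp => ?_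
  have hup : d (u * p) = d u := hd.map_mul_of_mem_ker h1 hu hp
  have hu' : d u⁻¹ ∈ K := hd.map_inv h1 hinv hu ▸ hinv _ hu
  show d (u * p * u⁻¹) = 1
  rw [hd.map_mul _ _ (hup ▸ hu) hu', hup, hd.map_inv h1 hinv hu, mul_inv_cancel]

theorem exists_finite_model (hd : IsWrapping d K) (h1 : (1 : G) ∈ K) (hinv : ∀ k ∈ K, k⁻¹ ∈ K) :
    ∃ (F : Type u) (_ : Group F) (_ : Fintype F) (f : G → F),
      Set.InjOn f K ∧ ∀ x ∈ K, ∀ y ∈ K, x * y ∈ K → f (x * y) = f x * f y := by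
  set P := hd.ker h1
  set N := Subgroup.normalizer (P : Set D)
  have hs : ∀ g, ∃ u ∈ N, g ∈ K → d u = g := by
    intro g
    by_cases hg : g ∈ K
    · obtain ⟨u, hu⟩ := hd.subset_range hg
      exact ⟨u, hd.mem_normalizer_ker h1 hinv (hu ▸ hg), fun _ => hu⟩
    · exact ⟨1, one_mem N, fun h => absurd h hg⟩
  choose s hsN hsd using hs
  let f : G → N ⧸ P.subgroupOf N := fun g => (⟨s g, hsN g⟩ : N)
  have hf_eq : ∀ {g : G} {v : D} (hv : v ∈ N), g ∈ K →
      ((f g = (⟨v, hv⟩ : N)) ↔ d v = g) := by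
    intro g v hv hg
    rw [QuotientGroup.eq, Subgroup.mem_subgroupOf]
    change (s g)⁻¹ * v ∈ P ↔ _
    rw [hd.inv_mul_mem_ker_iff h1 hinv ((hsd g hg).symm ▸ hg), hsd g hg]
  refine ⟨N ⧸ P.subgroupOf N, inferInstance, Fintype.ofFinite _, f, ?_, ?_⟩
  · intro x hx y hy hxy
    exact ((hf_eq (hsN y) hx).1 hxy).symm.trans (hsd y hy)
  · intro x hx y hy hxy
    refine (hf_eq (mul_mem (hsN x) (hsN y)) hxy).2 ?_
    rw [hd.map_mul _ _ ((hsd x hx).symm ▸ hx) ((hsd y hy).symm ▸ hy), hsd x hx, hsd y hy]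

end IsWrapping

/-- Every LWF group is an LEF group. -/
theorem Group.isLEF_of_isLWF (G : Type*) [Group G] (hG : Group.IsLWF G) :
    Group.IsLEF G := by
  classical
  intro H
  obtain ⟨D, _, _, d, hsub, hmul⟩ := hG (insert 1 (H ∪ H⁻¹))
  obtain ⟨F, instF, finF, f, hinj, hf⟩ := IsWrapping.exists_finite_model ⟨hsub, hmul⟩
    (by simp) (by simp [or_comm])
  have hH : (H : Set G) ⊆ ↑(insert 1 (H ∪ H⁻¹)) :=
    Finset.coe_subset.2 (Finset.subset_union_left.trans (Finset.subset_insert _ _))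
  exact ⟨F, instF, finF, f, hinj.mono hH, fun x hx y hy hxy => hf x (hH hx) y (hH hy) (hH hxy)⟩
end
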